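/- Let q be a real number with q > φ, let A(q) be the 2×2 real matrix with rows (1/q, 1/q²) and (1, 0), and let k ≥ 1 be a natural number satisfying k > ln( (q⁴ + 3q² + 1)/(φ² q²) ) / ( 2 (ln q - ln φ) ). Then the operator norm of the linear map ℝ² → ℝ² given by x ↦ A(q)^k x, with respect to the Euclidean norm on ℝ², is strictly less than 1. -/

import Mathlib

/-- The Fibonacci-like sequence with `f 0 = f 1 = 1`. -/
def fib1 : ℕ → ℕ
  | 0 => 1
  | 1 => 1
  | n + 2 => fib1 (n + 1) + fib1 n

/-- The golden ratio. -/
noncomputable def phi : ℝ := (1 + Real.sqrt 5) / 2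

lemma opnorm_le (M : Matrix (Fin 2) (Fin 2) ℝ) (r : ℝ) (hr : 0 ≤ r)
    (h : M 0 0 ^ 2 + M 0 1 ^ 2 + M 1 0 ^ 2 + M 1 1 ^ 2 ≤ r ^ 2) :
    ‖Matrix.toEuclideanCLM (𝕜 := ℝ) M‖ ≤ r := by
  apply ContinuousLinearMap.opNorm_le_bound _ hr
  intro x
  have hx : Matrix.toEuclideanCLM (𝕜 := ℝ) M x = (WithLp.equiv 2 _).symm (M.mulVec ((WithLp.equiv 2 _) x)) := by
    apply (WithLp.equiv 2 _).injective
    simp [Matrix.ofLp_toEuclideanCLM]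
  rw [hx]
  rw [EuclideanSpace.norm_eq, EuclideanSpace.norm_eq]
  set a := M 0 0; set b := M 0 1; set c := M 1 0; set d := M 1 1
  set u := (WithLp.equiv 2 (Fin 2 → ℝ)) x 0
  set v := (WithLp.equiv 2 (Fin 2 → ℝ)) x 1
  have h1 : ∑ i, ‖(WithLp.equiv 2 (Fin 2 → ℝ)).symm (M.mulVec ((WithLp.equiv 2 _) x)) i‖ ^ 2
      = (a * u + b * v) ^ 2 + (c * u + d * v) ^ 2 := by
    simp [Fin.sum_univ_two, Matrix.mulVec, dotProduct, sq_abs, a, b, c, d, u, v]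
  have h2 : ∑ i, ‖x i‖ ^ 2 = u ^ 2 + v ^ 2 := by
    simp [Fin.sum_univ_two, sq_abs, u, v]
  rw [h1, h2]
  have key : (a * u + b * v) ^ 2 + (c * u + d * v) ^ 2 ≤ r ^ 2 * (u ^ 2 + v ^ 2) := by
    nlinarith [sq_nonneg (a * v - b * u), sq_nonneg (c * v - d * u), sq_nonneg u, sq_nonneg v,
      sq_nonneg (a * u + b * v), sq_nonneg (c * u + d * v)]
  calc Real.sqrt ((a * u + b * v) ^ 2 + (c * u + d * v) ^ 2)
      ≤ Real.sqrt (r ^ 2 * (u ^ 2 + v ^ 2)) := Real.sqrt_le_sqrt key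
    _ = r * Real.sqrt (u ^ 2 + v ^ 2) := by
        rw [Real.sqrt_mul (sq_nonneg r), Real.sqrt_sq hr]

lemma powA (q : ℝ) (hq : q ≠ 0) : ∀ k, 1 ≤ k →
    (!![1 / q, 1 / q ^ 2; 1, 0] : Matrix (Fin 2) (Fin 2) ℝ) ^ k =
      !![(Nat.fib (k+1) : ℝ) / q ^ k, (Nat.fib k : ℝ) / q ^ (k+1);
         (Nat.fib k : ℝ) * q / q ^ k, (Nat.fib (k-1) : ℝ) / q ^ k] := by
  intro k hk
  induction k, hk using Nat.le_induction with
  | base =>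
    rw [pow_one]
    norm_num [Nat.fib]
    field_simp
  | succ n hn ih =>
    rw [pow_succ, ih, Matrix.mul_fin_two]
    have h1 : (Nat.fib (n + 1 + 1) : ℝ) = Nat.fib (n+1) + Nat.fib n := by
      rw [Nat.fib_add_two]; push_cast; ring
    have h2 : (Nat.fib (n + 1) : ℝ) = Nat.fib n + Nat.fib (n-1) := by
      rw [show n + 1 = (n-1) + 2 by omega, Nat.fib_add_two, show n - 1 + 1 = n by omega]
      push_cast; ring
    have hqk : q ^ n ≠ 0 := pow_ne_zero _ hq
    ext i j
    fin_cases i <;> fin_cases j <;>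
      simp [Nat.add_sub_cancel, h1, h2] <;> (try field_simp) <;> (try ring) <;> tauto

lemma phi_gt_one : 1 < phi := by
  have : (2:ℝ) < Real.sqrt 5 := by
    rw [show (2:ℝ) = Real.sqrt 4 by rw [show (4:ℝ) = 2^2 by norm_num, Real.sqrt_sq]; norm_num]
    exact Real.sqrt_lt_sqrt (by norm_num) (by norm_num)
  unfold phi; linarith

lemma phi_sq : phi ^ 2 = phi + 1 := by
  have h5 : Real.sqrt 5 ^ 2 = 5 := Real.sq_sqrt (by norm_num)
  unfold phi; field_simp; nlinarith [h5]

lemma fib_le (n : ℕ) : (Nat.fib n : ℝ) * phi ≤ phi ^ n := by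
  have h0 : 0 < phi := lt_trans one_pos phi_gt_one
  induction n using Nat.strong_induction_on with
  | _ n ih =>
    match n with
    | 0 => simp
    | 1 => simp
    | (m+2) =>
      have i1 := ih (m+1) (by omega)
      have i2 := ih m (by omega)
      rw [Nat.fib_add_two]
      push_cast
      have : phi ^ (m+2) = phi^(m+1) + phi^m := by
        have := phi_sq
        ring_nf
        nlinarith [pow_pos h0 m]
      rw [this]
      nlinarith

set_option maxHeartbeats 1000000 in
theorem stmt19 (q : ℝ) (hq : phi < q) (k : ℕ) (hk : 1 ≤ k)
    (hkbig : Real.log ((q ^ 4 + 3 * q ^ 2 + 1) / (phi ^ 2 * q ^ 2)) /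
        (2 * (Real.log q - Real.log phi)) < (k : ℝ)) :
    ‖Matrix.toEuclideanCLM (𝕜 := ℝ)
        ((!![1 / q, 1 / q ^ 2; 1, 0] : Matrix (Fin 2) (Fin 2) ℝ) ^ k)‖ < 1 := by
  have hphi1 : 1 < phi := phi_gt_one
  have hphi0 : 0 < phi := by linarith
  have hq1 : 1 < q := lt_trans hphi1 hq
  have hq0 : 0 < q := by linarith
  set C : ℝ := (q ^ 4 + 3 * q ^ 2 + 1) / (phi ^ 2 * q ^ 2) with hC
  have hCpos : 0 < C := by
    apply div_pos (by positivity) (by positivity)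
  -- from the log hypothesis: C < (q/phi)^(2k)
  have hld : 0 < 2 * (Real.log q - Real.log phi) := by
    have := Real.log_lt_log hphi0 hq; linarith
  have hlog : Real.log C < Real.log ((q / phi) ^ (2 * k)) := by
    rw [div_lt_iff₀ hld] at hkbig
    have h1 : Real.log ((q / phi) ^ (2 * k)) = 2 * k * (Real.log q - Real.log phi) := by
      rw [Real.log_pow, Real.log_div (ne_of_gt hq0) (ne_of_gt hphi0)]
      push_cast; ring
    rw [h1]; nlinarith
  have hClt : C < (q / phi) ^ (2 * k) :=
    (Real.log_lt_log_iff hCpos (by positivity)).mp hlog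
  set F : ℝ := (phi / q) ^ (2 * k) * C with hF
  have hFnn : 0 ≤ F := by positivity
  have hF1 : F < 1 := by
    have hpq : (phi / q) ^ (2 * k) = ((q / phi) ^ (2 * k))⁻¹ := by
      rw [← inv_pow]; congr 1; rw [inv_div]
    rw [hF, hpq, inv_mul_lt_iff₀ (by positivity), mul_one]
    exact hClt
  -- rewrite the power
  rw [powA q (ne_of_gt hq0) k hk]
  refine lt_of_le_of_lt (opnorm_le _ (Real.sqrt F) (Real.sqrt_nonneg _) ?_) ?_
  swap
  · calc Real.sqrt F < Real.sqrt 1 := Real.sqrt_lt_sqrt hFnn hF1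
      _ = 1 := Real.sqrt_one
  · rw [Real.sq_sqrt hFnn]
    -- entries
    have e00 : (!![(Nat.fib (k+1) : ℝ) / q ^ k, (Nat.fib k : ℝ) / q ^ (k+1);
         (Nat.fib k : ℝ) * q / q ^ k, (Nat.fib (k-1) : ℝ) / q ^ k]) 0 0
        = (Nat.fib (k+1) : ℝ) / q ^ k := by simp
    have e01 : (!![(Nat.fib (k+1) : ℝ) / q ^ k, (Nat.fib k : ℝ) / q ^ (k+1);
         (Nat.fib k : ℝ) * q / q ^ k, (Nat.fib (k-1) : ℝ) / q ^ k]) 0 1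
        = (Nat.fib k : ℝ) / q ^ (k+1) := by simp
    have e10 : (!![(Nat.fib (k+1) : ℝ) / q ^ k, (Nat.fib k : ℝ) / q ^ (k+1);
         (Nat.fib k : ℝ) * q / q ^ k, (Nat.fib (k-1) : ℝ) / q ^ k]) 1 0
        = (Nat.fib k : ℝ) * q / q ^ k := by simp
    have e11 : (!![(Nat.fib (k+1) : ℝ) / q ^ k, (Nat.fib k : ℝ) / q ^ (k+1);
         (Nat.fib k : ℝ) * q / q ^ k, (Nat.fib (k-1) : ℝ) / q ^ k]) 1 1
        = (Nat.fib (k-1) : ℝ) / q ^ k := by simp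
    rw [e00, e01, e10, e11]
    set P : ℝ := phi ^ k with hP
    set Q : ℝ := q ^ k with hQ
    have hPpos : 0 < P := pow_pos hphi0 k
    have hQpos : 0 < Q := pow_pos hq0 k
    set f1 : ℝ := (Nat.fib (k+1) : ℝ)
    set f2 : ℝ := (Nat.fib k : ℝ)
    set f3 : ℝ := (Nat.fib (k-1) : ℝ)
    have hf1nn : 0 ≤ f1 := Nat.cast_nonneg _
    have hf2nn : 0 ≤ f2 := Nat.cast_nonneg _
    have hf3nn : 0 ≤ f3 := Nat.cast_nonneg _
    have b1 : f1 ≤ P := by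
      have := fib_le (k+1)
      rw [pow_succ] at this
      exact le_of_mul_le_mul_right this hphi0
    have b2 : f2 * phi ≤ P := fib_le k
    have b3 : f3 * phi ^ 2 ≤ P := by
      have h := fib_le (k-1)
      have hk1 : phi ^ (k-1) * phi = P := by
        rw [hP, ← pow_succ, show k - 1 + 1 = k by omega]
      calc f3 * phi ^ 2 = (f3 * phi) * phi := by ring
        _ ≤ phi ^ (k-1) * phi := by
            apply mul_le_mul_of_nonneg_right h (le_of_lt hphi0)
        _ = P := hk1
    have hphi4 : phi ^ 4 = 3 * phi ^ 2 - 1 := by nlinarith [phi_sq]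
    -- squared bounds
    have c1 : f1 ^ 2 ≤ P ^ 2 := pow_le_pow_left₀ hf1nn b1 2
    have c2 : f2 ^ 2 * phi ^ 2 ≤ P ^ 2 := by
      have h := pow_le_pow_left₀ (by positivity : (0:ℝ) ≤ f2 * phi) b2 2
      calc f2 ^ 2 * phi ^ 2 = (f2 * phi) ^ 2 := by ring
        _ ≤ P ^ 2 := h
    have c3 : f3 ^ 2 * phi ^ 4 ≤ P ^ 2 := by
      have h := pow_le_pow_left₀ (by positivity : (0:ℝ) ≤ f3 * phi ^ 2) b3 2
      calc f3 ^ 2 * phi ^ 4 = (f3 * phi ^ 2) ^ 2 := by ring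
        _ ≤ P ^ 2 := h
    have h4 : P ^ 2 * q ^ 2 * phi ^ 4 = 3 * (P ^ 2 * q ^ 2) * phi ^ 2 - P ^ 2 * q ^ 2 := by
      rw [hphi4]; ring
    have key : f1 ^ 2 * phi ^ 4 * q ^ 2 + f2 ^ 2 * phi ^ 4 + f2 ^ 2 * q ^ 4 * phi ^ 4
        + f3 ^ 2 * phi ^ 4 * q ^ 2 ≤ P ^ 2 * phi ^ 2 * (q ^ 4 + 3 * q ^ 2 + 1) := by
      have w1 := mul_le_mul_of_nonneg_right c1 (by positivity : (0:ℝ) ≤ phi ^ 4 * q ^ 2)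
      have w2 := mul_le_mul_of_nonneg_right c2 (by positivity : (0:ℝ) ≤ phi ^ 2)
      have w3 := mul_le_mul_of_nonneg_right c2 (by positivity : (0:ℝ) ≤ q ^ 4 * phi ^ 2)
      have w4 := mul_le_mul_of_nonneg_right c3 (by positivity : (0:ℝ) ≤ q ^ 2)
      linarith [w1, w2, w3, w4, h4]
    have hPQ : (phi / q) ^ (2 * k) = P ^ 2 / Q ^ 2 := by
      rw [div_pow, mul_comm 2 k, pow_mul, pow_mul, hP, hQ]
    have hqk1 : q ^ (k + 1) = Q * q := by rw [hQ, pow_succ]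
    rw [hF, hC, hPQ, hqk1]
    have goal2 : (f1 / Q) ^ 2 + (f2 / (Q * q)) ^ 2 + (f2 * q / Q) ^ 2 + (f3 / Q) ^ 2
        ≤ P ^ 2 / Q ^ 2 * ((q ^ 4 + 3 * q ^ 2 + 1) / (phi ^ 2 * q ^ 2)) := by
      rw [div_mul_div_comm, le_div_iff₀ (by positivity)]
      have expand : ((f1 / Q) ^ 2 + (f2 / (Q * q)) ^ 2 + (f2 * q / Q) ^ 2 + (f3 / Q) ^ 2)
          * (Q ^ 2 * (phi ^ 2 * q ^ 2))
          = (f1 ^ 2 * phi ^ 4 * q ^ 2 + f2 ^ 2 * phi ^ 4 + f2 ^ 2 * q ^ 4 * phi ^ 4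
            + f3 ^ 2 * phi ^ 4 * q ^ 2) / phi ^ 2 := by
        field_simp
      rw [expand, div_le_iff₀ (by positivity : (0:ℝ) < phi ^ 2)]
      calc _ ≤ P ^ 2 * phi ^ 2 * (q ^ 4 + 3 * q ^ 2 + 1) := key
        _ = P ^ 2 * (q ^ 4 + 3 * q ^ 2 + 1) * phi ^ 2 := by ring
    exact goal2
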